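/- Under the stated hypotheses, the proximity operators of the integral proximal mixture and comixture are given, for every 𝗑 ∈ X, by prox_{rmi(L_ω, f_ω)_{ω∈Ω}}(𝗑) = ∫_Ω L_ω*(prox_{f_ω**}(L_ω 𝗑)) μ(dω) and prox_{rcm(L_ω, f_ω)_{ω∈Ω}}(𝗑) = 𝗑 − ∫_Ω L_ω*(prox_{f_ω*}(L_ω 𝗑)) μ(dω), where f** = (f*)*. -/

import Mathlib

/-
For each `ω` put `g_ω = f_ω*`, `p_ω = prox_{g_ω}` and `e_ω = g_ω □ Q_H`. As a conjugate, `g_ω` is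
convex, so `z - p_ω z` is a subgradient of `g_ω` at `p_ω z`. This one fact makes `e_ω` convex and
differentiable with `1`-Lipschitz gradient `Id - p_ω`, and gives Moreau's decomposition: the
proximity operator of `g_ω* = f_ω**` is `Id - p_ω`, and `g_ω* □ Q_H = Q_H - e_ω`, whose gradient is
`p_ω`.

Since `∫ ‖L_ω‖² ≤ 1`, the function `Φ = ∫ e_ω ∘ L_ω` is again convex with `1`-Lipschitz gradient
`R = ∫ L_ω* (Id - p_ω) L_ω`. For any such `Φ`, `x - R x` is a subgradient of `Φ* - Q_X` at `R x`,
so `R` is the proximity operator of `rmi = Φ* - Q_X` and, by Moreau's decomposition again, `Id - R`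
is that of its conjugate. The comixture is the same argument run on `Q_H - e_ω`.

The integrals make sense because `ω ↦ e_ω(x(ω))` is measurable: `e_ω(x) - e_ω(0)` is a limit of
Riemann sums of the gradient along the segment `[0, x]`, and `e_ω(0)` is recovered from the
integrable `f_ω*(r*(ω))` through `g_ω(y) = sup_z (e_ω(z) - ½‖z - y‖²)`, a supremum that may be taken
over a countable dense set.
-/

open MeasureTheory
open scoped ENNReal NNReal

/-- Fenchel conjugate `f*(u) = ⨆ x, ⟪x, u⟫ − f x` of an extended-real-valued function. -/
noncomputable def fconj {H : Type*} [NormedAddCommGroup H] [InnerProductSpace ℝ H]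
    (f : H → EReal) : H → EReal :=
  fun u => ⨆ x : H, ((inner ℝ x u : ℝ) : EReal) - f x

/-- Moreau envelope `(f □ Q)(x) = ⨅ y, f y + ½‖x − y‖²`. -/
noncomputable def morEnv {H : Type*} [NormedAddCommGroup H] [InnerProductSpace ℝ H]
    (f : H → EReal) : H → EReal :=
  fun x => ⨅ y : H, f y + ((2⁻¹ * ‖x - y‖ ^ 2 : ℝ) : EReal)

/-- `p` is the proximity operator of `f`: for every `x`, `p x` minimizes
`y ↦ f y + ½‖x − y‖²`. -/
def IsProxOf {H : Type*} [NormedAddCommGroup H] [InnerProductSpace ℝ H]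
    (f : H → EReal) (p : H → H) : Prop :=
  ∀ x y : H,
    f (p x) + ((2⁻¹ * ‖x - p x‖ ^ 2 : ℝ) : EReal) ≤ f y + ((2⁻¹ * ‖x - y‖ ^ 2 : ℝ) : EReal)

/-- `f ∈ Γ₀(H)`: proper (nowhere `−∞`, somewhere finite), lower semicontinuous and convex. -/
def Gamma0 {H : Type*} [NormedAddCommGroup H] [InnerProductSpace ℝ H]
    (f : H → EReal) : Prop :=
  (∀ x, f x ≠ ⊥) ∧ (∃ x, f x ≠ ⊤) ∧ LowerSemicontinuous f ∧
    ∀ (x y : H) (a b : ℝ), 0 < a → 0 < b → a + b = 1 →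
      f (a • x + b • y) ≤ (a : EReal) * f x + (b : EReal) * f y

/-- The subdifferential `∂F : x ↦ {u : ∀ y, ⟪y − x, u⟫ + F x ≤ F y}`. -/
def subdiff {X : Type*} [NormedAddCommGroup X] [InnerProductSpace ℝ X]
    (F : X → EReal) : X → Set X :=
  fun x => {u | ∀ y : X, F x + ((inner ℝ (y - x) u : ℝ) : EReal) ≤ F y}

/-- For a single-valued map `R : X → X`, `rmiOp R = R⁻¹ − Id` as a set-valued operator. -/
def rmiOp {X : Type*} [AddCommGroup X] (R : X → X) : X → Set X :=
  fun x => {u | R (x + u) = x}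

/-- The integral proximal mixture
`rmi(L_ω, f_ω) = (ξ ↦ ∫ (f_ω* □ Q_H)(L_ω ξ) dμ)* − Q_X`. -/
noncomputable def rmiFun {Ω : Type*} [MeasurableSpace Ω] (μ : Measure Ω)
    {X H : Type*} [NormedAddCommGroup X] [InnerProductSpace ℝ X]
    [NormedAddCommGroup H] [InnerProductSpace ℝ H]
    (L : Ω → X →L[ℝ] H) (f : Ω → H → EReal) : X → EReal :=
  fun ξ =>
    fconj (fun η : X => ((∫ ω, (morEnv (fconj (f ω)) (L ω η)).toReal ∂μ : ℝ) : EReal)) ξ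
      - ((2⁻¹ * ‖ξ‖ ^ 2 : ℝ) : EReal)

/-- The integral proximal comixture `rcm(L_ω, f_ω) = (rmi(L_ω, f_ω*))*`. -/
noncomputable def rcmFun {Ω : Type*} [MeasurableSpace Ω] (μ : Measure Ω)
    {X H : Type*} [NormedAddCommGroup X] [InnerProductSpace ℝ X]
    [NormedAddCommGroup H] [InnerProductSpace ℝ H]
    (L : Ω → X →L[ℝ] H) (f : Ω → H → EReal) : X → EReal :=
  fconj (rmiFun μ L (fun ω => fconj (f ω)))

open scoped RealInnerProductSpace Topology
open Filter

lemma tendsto_riemannSum_of_subgradient {φ s : ℝ → ℝ} (h : ∀ t t', φ t + s t * (t' - t) ≤ φ t') :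
    Tendsto (fun n : ℕ => ∑ k ∈ Finset.range n, s (k / n) / n) atTop (𝓝 (φ 1 - φ 0)) := by
  have hbounds : ∀ n : ℕ, 0 < n →
      φ 1 - φ 0 - (s 1 - s 0) / n ≤ ∑ k ∈ Finset.range n, s (k / n) / n ∧
        ∑ k ∈ Finset.range n, s (k / n) / n ≤ φ 1 - φ 0 := by
    intro n hn
    have hn' : (n : ℝ) ≠ 0 := by positivity
    have hgap : ∀ k : ℕ, ((k + 1 : ℕ) : ℝ) / n - k / n = 1 / n := fun k => by
      push_cast; ring
    have htel : ∑ k ∈ Finset.range n, (φ ((k + 1 : ℕ) / n) - φ (k / n)) = φ 1 - φ 0 := by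
      rw [Finset.sum_range_sub (fun k : ℕ => φ (k / n)), div_self hn', Nat.cast_zero, zero_div]
    have hshift : ∑ k ∈ Finset.range n, (s ((k + 1 : ℕ) / n) / n - s (k / n) / n) =
        (s 1 - s 0) / n := by
      rw [Finset.sum_range_sub (fun k : ℕ => s (k / n) / n), div_self hn', Nat.cast_zero,
        zero_div, sub_div]
    have hlow : ∀ k : ℕ, s (k / n) / n ≤ φ ((k + 1 : ℕ) / n) - φ (k / n) := fun k => by
      have := h (k / n) ((k + 1 : ℕ) / n)
      rw [hgap, mul_one_div] at this
      linarith
    have hup : ∀ k : ℕ, φ ((k + 1 : ℕ) / n) - φ (k / n) ≤ s ((k + 1 : ℕ) / n) / n := fun k => by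
      have := h ((k + 1 : ℕ) / n) (k / n)
      rw [← neg_sub, hgap, mul_neg, mul_one_div] at this
      linarith
    have hsum_low := Finset.sum_le_sum fun k (_ : k ∈ Finset.range n) => hlow k
    have hsum_up := Finset.sum_le_sum fun k (_ : k ∈ Finset.range n) => hup k
    rw [htel] at hsum_low hsum_up
    rw [Finset.sum_sub_distrib] at hshift
    constructor <;> linarith
  have hlim : Tendsto (fun n : ℕ => φ 1 - φ 0 - (s 1 - s 0) / n) atTop (𝓝 (φ 1 - φ 0)) := by
    simpa using (tendsto_const_div_atTop_nhds_zero_nat (s 1 - s 0)).const_sub (φ 1 - φ 0)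
  refine tendsto_of_tendsto_of_tendsto_of_le_of_le' hlim tendsto_const_nhds ?_ ?_ <;>
    filter_upwards [eventually_gt_atTop 0] with n hn
  exacts [(hbounds n hn).1, (hbounds n hn).2]

lemma IsLUB.range_sub_const {ι : Sort*} {f : ι → ℝ} {t : ℝ} (h : IsLUB (Set.range f) t) (c : ℝ) :
    IsLUB (Set.range fun i => f i - c) (t - c) := by
  have := (OrderIso.addRight (-c)).isLUB_image'.mpr h
  simpa [← Set.range_comp, Function.comp_def, sub_eq_add_neg] using this

lemma IsLUB.range_restrict_dense {E : Type*} [TopologicalSpace E] {h : E → ℝ} {t : ℝ}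
    (hlub : IsLUB (Set.range h) t) (hcont : Continuous h) {S : Set E} (hS : Dense S) :
    IsLUB (Set.range fun s : S => h s) t := by
  rwa [← Set.image_eq_range, isLUB_congr (hS.upperBounds_image hcont)]

section InnerProductSpace

variable {E : Type*} [NormedAddCommGroup E] [InnerProductSpace ℝ E]

lemma abs_real_inner_le_half_sq_add (x y : E) :
    |⟪x, y⟫| ≤ 2⁻¹ * ‖x‖ ^ 2 + 2⁻¹ * ‖y‖ ^ 2 :=
  (abs_real_inner_le_norm x y).trans (by linarith [two_mul_le_add_sq ‖x‖ ‖y‖])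

lemma norm_sub_sq_le_two_mul (x y : E) : ‖x - y‖ ^ 2 ≤ 2 * ‖x‖ ^ 2 + 2 * ‖y‖ ^ 2 := by
  linarith [norm_sub_sq_real x y, neg_le_of_abs_le (abs_real_inner_le_half_sq_add x y)]

lemma norm_sq_eq_add_inner_add (z z' : E) :
    ‖z'‖ ^ 2 = ‖z‖ ^ 2 + 2 * ⟪z, z' - z⟫ + ‖z' - z‖ ^ 2 := by
  rw [← norm_add_sq_real, add_sub_cancel]

end InnerProductSpace

lemma norm_apply_sq_le_opNorm_sq {X H : Type*} [NormedAddCommGroup X] [NormedSpace ℝ X]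
    [NormedAddCommGroup H] [NormedSpace ℝ H] (A : X →L[ℝ] H) (x : X) :
    ‖A x‖ ^ 2 ≤ ‖A‖ ^ 2 * ‖x‖ ^ 2 := by
  rw [← mul_pow]
  exact pow_le_pow_left₀ (norm_nonneg _) (A.le_opNorm x) 2

section Conjugate

variable {H : Type*} [NormedAddCommGroup H] [InnerProductSpace ℝ H]

lemma inner_sub_le_fconj (f : H → EReal) (x u : H) :
    ((⟪x, u⟫ : ℝ) : EReal) - f x ≤ fconj f u :=
  le_iSup (fun y => ((⟪y, u⟫ : ℝ) : EReal) - f y) x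

lemma inner_sub_coe_le_fconj {f : H → EReal} {x : H} {t : ℝ} (hx : f x = t) (u : H) :
    ((⟪x, u⟫ - t : ℝ) : EReal) ≤ fconj f u := by
  simpa only [hx, ← EReal.coe_sub] using inner_sub_le_fconj f x u

lemma fconj_ne_bot {f : H → EReal} {x : H} {t : ℝ} (hx : f x = t) (u : H) : fconj f u ≠ ⊥ :=
  ne_bot_of_le_ne_bot (EReal.coe_ne_bot _) (inner_sub_coe_le_fconj hx u)

lemma fconj_antitone {f g : H → EReal} (h : ∀ x, f x ≤ g x) (u : H) : fconj g u ≤ fconj f u :=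
  iSup_le fun x => (EReal.sub_le_sub le_rfl (h x)).trans (inner_sub_le_fconj f x u)

lemma fconj_fconj_le (f : H → EReal) (x : H) : fconj (fconj f) x ≤ f x := by
  refine iSup_le fun u => ?_
  have hyoung := inner_sub_le_fconj f x u
  rw [real_inner_comm]
  induction hfx : f x using EReal.rec with
  | bot =>
    rw [hfx, EReal.coe_sub_bot, top_le_iff] at hyoung
    rw [hyoung, EReal.sub_top]
  | coe t =>
    rw [hfx, ← EReal.coe_sub] at hyoung
    calc ((⟪x, u⟫ : ℝ) : EReal) - fconj f u ≤ ((⟪x, u⟫ : ℝ) : EReal) - ((⟪x, u⟫ - t : ℝ) : EReal) :=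
          EReal.sub_le_sub le_rfl hyoung
      _ = t := by rw [← EReal.coe_sub, sub_sub_cancel]
  | top => exact le_top

lemma fconj_fconj_fconj (f : H → EReal) : fconj (fconj (fconj f)) = fconj f :=
  funext fun u => le_antisymm (fconj_fconj_le (fconj f) u)
    (fconj_antitone (fconj_fconj_le f) u)

lemma fconj_smul_add_smul_le (f : H → EReal) {u v : H} {s₁ s₂ a b : ℝ}
    (hu : fconj f u = s₁) (hv : fconj f v = s₂) (ha : 0 ≤ a) (hb : 0 ≤ b) (hab : a + b = 1) :
    fconj f (a • u + b • v) ≤ ((a * s₁ + b * s₂ : ℝ) : EReal) := by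
  refine iSup_le fun x => ?_
  induction hfx : f x using EReal.rec with
  | bot =>
    have h := inner_sub_le_fconj f x u
    rw [hfx, EReal.coe_sub_bot, hu, top_le_iff] at h
    exact absurd h (EReal.coe_ne_top _)
  | coe t =>
    have h₁ := inner_sub_coe_le_fconj hfx u
    have h₂ := inner_sub_coe_le_fconj hfx v
    rw [hu, EReal.coe_le_coe_iff] at h₁
    rw [hv, EReal.coe_le_coe_iff] at h₂
    rw [← EReal.coe_sub, EReal.coe_le_coe_iff, inner_add_right, real_inner_smul_right,
      real_inner_smul_right]
    have hb' : b = 1 - a := by linarith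
    subst hb'
    nlinarith [mul_le_mul_of_nonneg_left h₁ ha, mul_le_mul_of_nonneg_left h₂ hb]
  | top => rw [EReal.sub_top]; exact bot_le

end Conjugate

section Subdifferential

variable {H : Type*} [NormedAddCommGroup H] [InnerProductSpace ℝ H] {g : H → EReal} {p : H → H}

lemma fconj_eq_of_mem_subdiff {x u : H} {t : ℝ} (h : u ∈ subdiff g x) (hx : g x = t) :
    fconj g u = ((⟪x, u⟫ - t : ℝ) : EReal) := by
  refine le_antisymm (iSup_le fun y => ?_) (inner_sub_coe_le_fconj hx u)
  have hy := h y
  rw [hx, ← EReal.coe_add] at hy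
  calc ((⟪y, u⟫ : ℝ) : EReal) - g y ≤ ((⟪y, u⟫ : ℝ) : EReal) - ((t + ⟪y - x, u⟫ : ℝ) : EReal) :=
        EReal.sub_le_sub le_rfl hy
    _ = ((⟪x, u⟫ - t : ℝ) : EReal) := by
        rw [← EReal.coe_sub, inner_sub_left]
        ring_nf

lemma mem_subdiff_fconj {x u : H} {t : ℝ} (h : u ∈ subdiff g x) (hx : g x = t) :
    x ∈ subdiff (fconj g) u := by
  intro v
  rw [fconj_eq_of_mem_subdiff h hx, ← EReal.coe_add, inner_sub_left, real_inner_comm x u,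
    real_inner_comm x v]
  convert inner_sub_coe_le_fconj hx v using 2
  ring

lemma add_half_sq_le_of_mem_subdiff {z w : H} (h : z - w ∈ subdiff g w) (u : H) :
    g w + ((2⁻¹ * ‖z - w‖ ^ 2 + 2⁻¹ * ‖u - w‖ ^ 2 : ℝ) : EReal) ≤
      g u + ((2⁻¹ * ‖z - u‖ ^ 2 : ℝ) : EReal) := by
  have hsq : 2⁻¹ * ‖z - w‖ ^ 2 + 2⁻¹ * ‖u - w‖ ^ 2 = ⟪u - w, z - w⟫ + 2⁻¹ * ‖z - u‖ ^ 2 := by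
    rw [show z - u = (z - w) - (u - w) by abel, norm_sub_sq_real (z - w) (u - w), real_inner_comm]
    ring
  rw [hsq, EReal.coe_add, ← add_assoc]
  exact add_le_add_left (h u) _

lemma isProxOf_of_mem_subdiff (h : ∀ z, z - p z ∈ subdiff g (p z)) : IsProxOf g p :=
  fun z u =>
    (add_le_add_right (EReal.coe_le_coe_iff.mpr (le_add_of_nonneg_right (by positivity))) _).trans
      (add_half_sq_le_of_mem_subdiff (h z) u)

lemma IsProxOf.eq_of_mem_subdiff {q : H → H} (hq : IsProxOf g q) {z w : H} {t : ℝ}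
    (h : z - w ∈ subdiff g w) (hw : g w = t) : q z = w := by
  have hle := (add_half_sq_le_of_mem_subdiff h (q z)).trans (hq z w)
  rw [hw, ← EReal.coe_add, ← EReal.coe_add, EReal.coe_le_coe_iff] at hle
  have hsq : ‖q z - w‖ ^ 2 ≤ 0 := by linarith
  exact sub_eq_zero.mp (norm_eq_zero.mp (pow_eq_zero_iff two_ne_zero |>.mp
    (le_antisymm hsq (sq_nonneg _))))

lemma IsProxOf.morEnv_eq (hp : IsProxOf g p) (z : H) :
    morEnv g z = g (p z) + ((2⁻¹ * ‖z - p z‖ ^ 2 : ℝ) : EReal) :=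
  le_antisymm (iInf_le _ (p z)) (le_iInf (hp z))

lemma IsProxOf.ne_top (hp : IsProxOf g p) {y : H} {t : ℝ} (hy : g y = t) (z : H) :
    g (p z) ≠ ⊤ := by
  intro htop
  have h := hp z y
  rw [htop, hy, EReal.top_add_coe, ← EReal.coe_add, top_le_iff] at h
  exact EReal.coe_ne_top _ h

/-- `p` is the resolvent `(Id + ∂g)⁻¹` of the subdifferential of `g`, and `g` is finite on the
range of `p`. -/
structure IsResolvent (g : H → EReal) (p : H → H) : Prop where
  sub_mem_subdiff : ∀ z, z - p z ∈ subdiff g (p z)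
  ne_bot : ∀ z, g (p z) ≠ ⊥
  ne_top : ∀ z, g (p z) ≠ ⊤

lemma IsResolvent.coe_toReal (hp : IsResolvent g p) (z : H) :
    ((g (p z)).toReal : EReal) = g (p z) :=
  EReal.coe_toReal (hp.ne_top z) (hp.ne_bot z)

lemma IsResolvent.isProxOf (hp : IsResolvent g p) : IsProxOf g p :=
  isProxOf_of_mem_subdiff hp.sub_mem_subdiff

lemma IsResolvent.mem_subdiff_fconj (hp : IsResolvent g p) (z : H) :
    z - (z - p z) ∈ subdiff (fconj g) (z - p z) := by
  simpa only [sub_sub_cancel] using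
    _root_.mem_subdiff_fconj (hp.sub_mem_subdiff z) (hp.coe_toReal z).symm

/-- Moreau's decomposition `prox_{g*} = Id - prox_g`. -/
lemma IsResolvent.isProxOf_fconj (hp : IsResolvent g p) :
    IsProxOf (fconj g) (fun z => z - p z) :=
  isProxOf_of_mem_subdiff hp.mem_subdiff_fconj

lemma IsResolvent.eq_sub_of_isProxOf_fconj (hp : IsResolvent g p) {q : H → H}
    (hq : IsProxOf (fconj g) q) (z : H) : q z = z - p z :=
  hq.eq_of_mem_subdiff (hp.mem_subdiff_fconj z)
    (fconj_eq_of_mem_subdiff (hp.sub_mem_subdiff z) (hp.coe_toReal z).symm)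

end Subdifferential

section ConvexSmooth

variable {E : Type*} [NormedAddCommGroup E] [InnerProductSpace ℝ E] {φ : E → ℝ} {G : E → E}

/-- `φ` is convex and differentiable with `1`-Lipschitz gradient `G`, in the form of the two
first-order inequalities that characterize this on a Hilbert space. -/
structure IsConvexSmooth (φ : E → ℝ) (G : E → E) : Prop where
  add_inner_le : ∀ z z', φ z + ⟪G z, z' - z⟫ ≤ φ z'
  le_add_inner_add : ∀ z z', φ z' ≤ φ z + ⟪G z, z' - z⟫ + 2⁻¹ * ‖z' - z‖ ^ 2

lemma IsConvexSmooth.half_sq_sub (h : IsConvexSmooth φ G) :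
    IsConvexSmooth (fun z => 2⁻¹ * ‖z‖ ^ 2 - φ z) (fun z => z - G z) where
  add_inner_le z z' := by
    have := h.le_add_inner_add z z'
    have := norm_sq_eq_add_inner_add z z'
    rw [inner_sub_left]
    linarith
  le_add_inner_add z z' := by
    have := h.add_inner_le z z'
    have := norm_sq_eq_add_inner_add z z'
    rw [inner_sub_left]
    linarith

lemma IsConvexSmooth.continuous (h : IsConvexSmooth φ G) : Continuous φ := by
  refine continuous_iff_continuousAt.mpr fun z => ?_
  refine continuousAt_of_locally_lipschitz one_pos (‖G z‖ + 1) fun z' hz' => ?_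
  simp only [dist_eq_norm] at hz' ⊢
  rw [Real.norm_eq_abs, abs_le]
  have hlow := h.add_inner_le z z'
  have hup := h.le_add_inner_add z z'
  obtain ⟨hcs₁, hcs₂⟩ := abs_le.mp (abs_real_inner_le_norm (G z) (z' - z))
  have hsq : ‖z' - z‖ ^ 2 ≤ ‖z' - z‖ := by
    rw [sq]; exact mul_le_of_le_one_left (norm_nonneg _) hz'.le
  constructor <;> nlinarith [norm_nonneg (G z), norm_nonneg (z' - z)]

lemma IsConvexSmooth.tendsto_riemannSum (h : IsConvexSmooth φ G) (z : E) :
    Tendsto (fun n : ℕ => ∑ k ∈ Finset.range n, ⟪G (((k : ℝ) / n) • z), z⟫ / n) atTop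
      (𝓝 (φ z - φ 0)) := by
  have hsub : ∀ t t' : ℝ, φ (t • z) + ⟪G (t • z), z⟫ * (t' - t) ≤ φ (t' • z) := fun t t' => by
    simpa only [← sub_smul, real_inner_smul_right, mul_comm] using h.add_inner_le (t • z) (t' • z)
  simpa only [one_smul, zero_smul] using tendsto_riemannSum_of_subgradient hsub

end ConvexSmooth

section Envelope

variable {H : Type*} [NormedAddCommGroup H] [InnerProductSpace ℝ H] {g : H → EReal} {p : H → H}

lemma IsResolvent.morEnv_eq_coe (hp : IsResolvent g p) (z : H) :
    morEnv g z = (((g (p z)).toReal + 2⁻¹ * ‖z - p z‖ ^ 2 : ℝ) : EReal) := by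
  rw [hp.isProxOf.morEnv_eq, EReal.coe_add, hp.coe_toReal]

lemma IsResolvent.isConvexSmooth_morEnv (hp : IsResolvent g p) :
    IsConvexSmooth (fun z => (morEnv g z).toReal) (fun z => z - p z) where
  add_inner_le z z' := by
    have h := hp.sub_mem_subdiff z (p z')
    rw [← hp.coe_toReal z, ← hp.coe_toReal z', ← EReal.coe_add, EReal.coe_le_coe_iff] at h
    simp only [hp.morEnv_eq_coe, EReal.toReal_coe]
    have hsplit : p z' - p z = (z' - z) - (z' - p z') + (z - p z) := by abel
    rw [hsplit, inner_add_left, inner_sub_left, real_inner_self_eq_norm_sq] at h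
    nlinarith [norm_sub_sq_real (z' - p z') (z - p z), real_inner_comm (z - p z) (z' - z),
      real_inner_comm (z - p z) (z' - p z')]
  le_add_inner_add z z' := by
    have h : morEnv g z' ≤ g (p z) + ((2⁻¹ * ‖z' - p z‖ ^ 2 : ℝ) : EReal) := iInf_le _ (p z)
    rw [hp.morEnv_eq_coe, ← hp.coe_toReal z, ← EReal.coe_add, EReal.coe_le_coe_iff] at h
    simp only [hp.morEnv_eq_coe, EReal.toReal_coe]
    have hsplit : z' - p z = (z - p z) + (z' - z) := by abel
    rw [hsplit, norm_add_sq_real] at h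
    linarith

lemma IsResolvent.morEnv_fconj_toReal (hp : IsResolvent g p) (z : H) :
    (morEnv (fconj g) z).toReal = 2⁻¹ * ‖z‖ ^ 2 - (morEnv g z).toReal := by
  rw [hp.isProxOf_fconj.morEnv_eq,
    fconj_eq_of_mem_subdiff (hp.sub_mem_subdiff z) (hp.coe_toReal z).symm, hp.morEnv_eq_coe,
    sub_sub_cancel, ← EReal.coe_add, EReal.toReal_coe, EReal.toReal_coe]
  linarith [norm_sq_eq_add_inner_add (p z) z]

lemma IsResolvent.isConvexSmooth_morEnv_fconj (hp : IsResolvent g p) :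
    IsConvexSmooth (fun z => (morEnv (fconj g) z).toReal) p := by
  have h := hp.isConvexSmooth_morEnv.half_sq_sub
  simp only [sub_sub_cancel] at h
  convert h using 1
  exact funext hp.morEnv_fconj_toReal

end Envelope

section FconjSubHalfSq

variable {X : Type*} [NormedAddCommGroup X] [InnerProductSpace ℝ X] {Φ : X → ℝ} {R : X → X}

/-- `Φ* - Q_X`; `rmiFun μ L f` is this function for `Φ η = ∫ ω, (f_ω* □ Q_H)(L ω η) ∂μ`. -/
noncomputable def fconjSubHalfSq (Φ : X → ℝ) : X → EReal :=
  fun ξ => fconj (fun η => (Φ η : EReal)) ξ - ((2⁻¹ * ‖ξ‖ ^ 2 : ℝ) : EReal)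

lemma IsConvexSmooth.fconj_apply (h : IsConvexSmooth Φ R) (x : X) :
    fconj (fun η => (Φ η : EReal)) (R x) = ((⟪x, R x⟫ - Φ x : ℝ) : EReal) := by
  refine fconj_eq_of_mem_subdiff (fun η => ?_) rfl
  rw [← EReal.coe_add, EReal.coe_le_coe_iff, real_inner_comm]
  exact h.add_inner_le x η

lemma IsConvexSmooth.fconjSubHalfSq_apply (h : IsConvexSmooth Φ R) (x : X) :
    fconjSubHalfSq Φ (R x) = ((⟪x, R x⟫ - Φ x - 2⁻¹ * ‖R x‖ ^ 2 : ℝ) : EReal) := by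
  rw [fconjSubHalfSq, h.fconj_apply, ← EReal.coe_sub]

lemma IsConvexSmooth.sub_mem_subdiff_fconjSubHalfSq (h : IsConvexSmooth Φ R) (x : X) :
    x - R x ∈ subdiff (fconjSubHalfSq Φ) (R x) := by
  intro y
  -- `Φ*` is `1`-strongly convex: Young's inequality at `x + (y - R x)` plus the upper bound on `Φ`
  have hstrong : ((⟪x, y⟫ - Φ x + 2⁻¹ * ‖y - R x‖ ^ 2 : ℝ) : EReal) ≤
      fconj (fun η => (Φ η : EReal)) y := by
    refine le_trans ?_ (inner_sub_coe_le_fconj (x := x + (y - R x)) rfl y)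
    have hup := h.le_add_inner_add x (x + (y - R x))
    rw [add_sub_cancel_left] at hup
    rw [EReal.coe_le_coe_iff, inner_add_left]
    have hsq : ⟪y - R x, y⟫ - ⟪R x, y - R x⟫ = ‖y - R x‖ ^ 2 := by
      rw [real_inner_comm (y - R x) (R x), ← inner_sub_right, real_inner_self_eq_norm_sq]
    linarith
  rw [h.fconjSubHalfSq_apply, ← EReal.coe_add, fconjSubHalfSq]
  refine le_trans ?_ (EReal.sub_le_sub hstrong le_rfl)
  rw [← EReal.coe_sub, EReal.coe_le_coe_iff]
  have hexp : ⟪y - R x, x - R x⟫ = ⟪y, x⟫ - ⟪y, R x⟫ - ⟪R x, x⟫ + ‖R x‖ ^ 2 := by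
    rw [inner_sub_left, inner_sub_right, inner_sub_right, real_inner_self_eq_norm_sq]
    ring
  linarith [norm_sub_sq_real y (R x), real_inner_comm x y, real_inner_comm x (R x)]

lemma IsConvexSmooth.isProxOf_fconjSubHalfSq (h : IsConvexSmooth Φ R) :
    IsProxOf (fconjSubHalfSq Φ) R ∧ IsProxOf (fconj (fconjSubHalfSq Φ)) (fun ξ => ξ - R ξ) := by
  have hres : IsResolvent (fconjSubHalfSq Φ) R :=
    ⟨h.sub_mem_subdiff_fconjSubHalfSq,
      fun x => by rw [h.fconjSubHalfSq_apply]; exact EReal.coe_ne_bot _,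
      fun x => by rw [h.fconjSubHalfSq_apply]; exact EReal.coe_ne_top _⟩
  exact ⟨hres.isProxOf, hres.isProxOf_fconj⟩

end FconjSubHalfSq

section ProxOfConjugate

variable {H : Type*} [NormedAddCommGroup H] [InnerProductSpace ℝ H] {f : H → EReal} {p : H → H}
  {a aₛ : H} {α αₛ : ℝ}

lemma IsProxOf.sub_mem_subdiff_fconj (hp : IsProxOf (fconj f) p)
    (hbot : ∀ z, fconj f (p z) ≠ ⊥) (htop : ∀ z, fconj f (p z) ≠ ⊤) (z : H) :
    z - p z ∈ subdiff (fconj f) (p z) := by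
  -- compare `p z` with the points `(1 - s) • p z + s • y`, using convexity of `fconj f`, and let
  -- `s → 0`
  intro y
  set γ := (fconj f (p z)).toReal
  have hγ : fconj f (p z) = γ := (EReal.coe_toReal (htop z) (hbot z)).symm
  rw [hγ]
  induction hy : fconj f y using EReal.rec with
  | bot =>
    have h := hp z y
    rw [hγ, hy, EReal.bot_add, ← EReal.coe_add, le_bot_iff] at h
    exact absurd h (EReal.coe_ne_bot _)
  | coe t =>
    rw [← EReal.coe_add, EReal.coe_le_coe_iff]
    set A := z - p z
    set d := y - p z
    have hsmall : ∀ s ∈ Set.Ioo (0 : ℝ) 1, γ + ⟪d, A⟫ ≤ t + s * (2⁻¹ * ‖d‖ ^ 2) := by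
      rintro s ⟨hs₀, hs₁⟩
      have hconv := fconj_smul_add_smul_le f hγ hy (a := 1 - s) (b := s) (by linarith) hs₀.le
        (by ring)
      have hprox := (hp z ((1 - s) • p z + s • y)).trans (add_le_add_left hconv _)
      rw [hγ, ← EReal.coe_add, ← EReal.coe_add, EReal.coe_le_coe_iff,
        show z - ((1 - s) • p z + s • y) = A - s • d by simp only [A, d]; module,
        norm_sub_sq_real A (s • d), real_inner_smul_right, norm_smul, Real.norm_of_nonneg hs₀.le,
        real_inner_comm] at hprox
      nlinarith
    have hlim : Tendsto (fun s : ℝ => t + s * (2⁻¹ * ‖d‖ ^ 2)) (𝓝[>] 0) (𝓝 t) := by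
      have := (tendsto_const_nhds (x := t)).add
        ((tendsto_id (x := 𝓝 (0 : ℝ))).mul_const (2⁻¹ * ‖d‖ ^ 2))
      simpa using this.mono_left nhdsWithin_le_nhds
    exact ge_of_tendsto hlim (eventually_of_mem (Ioo_mem_nhdsGT one_pos) hsmall)
  | top => exact le_top

lemma IsProxOf.isResolvent_fconj (hp : IsProxOf (fconj f) p) (ha : f a = α)
    (haₛ : fconj f aₛ = αₛ) : IsResolvent (fconj f) p :=
  have hbot := fun z => fconj_ne_bot ha (p z)
  have htop := hp.ne_top haₛ
  ⟨hp.sub_mem_subdiff_fconj hbot htop, hbot, htop⟩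

lemma IsResolvent.isLUB_morEnv_sub_half_sq (hp : IsResolvent (fconj f) p) {x₀ : H} {t : ℝ}
    (hx₀ : fconj f x₀ = t) :
    IsLUB (Set.range fun z => (morEnv (fconj f) z).toReal - 2⁻¹ * ‖z - x₀‖ ^ 2) t := by
  refine ⟨?_, fun b hb => le_of_not_gt fun hbt => ?_⟩
  · rintro _ ⟨z, rfl⟩
    have h : morEnv (fconj f) z ≤ fconj f x₀ + ((2⁻¹ * ‖z - x₀‖ ^ 2 : ℝ) : EReal) := iInf_le _ x₀
    rw [hp.morEnv_eq_coe, hx₀, ← EReal.coe_add, EReal.coe_le_coe_iff] at h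
    simp only [hp.morEnv_eq_coe, EReal.toReal_coe]
    linarith
  -- `fconj f` is its own biconjugate, so `t` is approached by `⟪u, x₀⟫ - fconj (fconj f) u`
  have hbi : ((b : ℝ) : EReal) < fconj (fconj (fconj f)) x₀ := by
    rw [fconj_fconj_fconj, hx₀]; exact EReal.coe_lt_coe_iff.mpr hbt
  obtain ⟨u, hu⟩ := lt_iSup_iff.mp hbi
  set z := x₀ + u
  have hyoung := EReal.sub_le_sub (le_refl ((⟪u, x₀⟫ : ℝ) : EReal))
    (inner_sub_coe_le_fconj (hp.coe_toReal z).symm u)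
  rw [← EReal.coe_sub] at hyoung
  have hbu := EReal.coe_lt_coe_iff.mp (hu.trans_le hyoung)
  have hmem := hb ⟨z, rfl⟩
  simp only [hp.morEnv_eq_coe, EReal.toReal_coe] at hmem
  have hsplit : z - p z = (x₀ - p z) + u := by simp only [z]; abel
  rw [hsplit, norm_add_sq_real, show z - x₀ = u by simp only [z]; abel, inner_sub_left] at hmem
  nlinarith [sq_nonneg ‖x₀ - p z‖, real_inner_comm x₀ u]

lemma IsResolvent.morEnv_fconj_bounds (hp : IsResolvent (fconj f) p) (ha : f a = α)
    (haₛ : fconj f aₛ = αₛ) (z : H) :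
    (fconj f (p z)).toReal + 2⁻¹ * ‖z - p z‖ ^ 2 ≤ αₛ + 2⁻¹ * ‖z - aₛ‖ ^ 2 ∧
      ⟪a, p z⟫ - α ≤ (fconj f (p z)).toReal := by
  have hup := hp.isProxOf z aₛ
  have hyoung := inner_sub_coe_le_fconj ha (p z)
  rw [← hp.coe_toReal, haₛ, ← EReal.coe_add, ← EReal.coe_add, EReal.coe_le_coe_iff] at hup
  rw [← hp.coe_toReal, EReal.coe_le_coe_iff] at hyoung
  exact ⟨hup, hyoung⟩

lemma IsResolvent.abs_morEnv_fconj_le (hp : IsResolvent (fconj f) p) (ha : f a = α)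
    (haₛ : fconj f aₛ = αₛ) (z : H) :
    |(morEnv (fconj f) z).toReal| ≤ |α| + |αₛ| + ‖a‖ ^ 2 + ‖aₛ‖ ^ 2 + ‖z‖ ^ 2 := by
  obtain ⟨hup, hyoung⟩ := hp.morEnv_fconj_bounds ha haₛ z
  rw [hp.morEnv_eq_coe, EReal.toReal_coe, abs_le]
  have hpz : ⟪a, p z⟫ = ⟪a, z⟫ - ⟪a, z - p z⟫ := by rw [inner_sub_right, sub_sub_cancel]
  have h₁ := neg_le_of_abs_le (abs_real_inner_le_half_sq_add a z)
  have h₂ := norm_sub_sq_real a (z - p z)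
  have h₃ := norm_sub_sq_le_two_mul z aₛ
  constructor <;> linarith [le_abs_self α, neg_abs_le α, le_abs_self αₛ, abs_nonneg α,
    abs_nonneg αₛ, sq_nonneg ‖a - (z - p z)‖, sq_nonneg ‖a‖, sq_nonneg ‖aₛ‖, sq_nonneg ‖z‖]

lemma IsResolvent.norm_sub_sq_le (hp : IsResolvent (fconj f) p) (ha : f a = α)
    (haₛ : fconj f aₛ = αₛ) (z : H) :
    ‖z - p z‖ ^ 2 ≤ 6 * (|α| + |αₛ| + ‖a‖ ^ 2 + ‖aₛ‖ ^ 2 + ‖z‖ ^ 2) := by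
  obtain ⟨hup, hyoung⟩ := hp.morEnv_fconj_bounds ha haₛ z
  have hpz : ⟪a, p z⟫ = ⟪a, z⟫ - ⟪a, z - p z⟫ := by rw [inner_sub_right, sub_sub_cancel]
  have h₁ := neg_le_of_abs_le (abs_real_inner_le_half_sq_add a z)
  have h₂ : ⟪a, z - p z⟫ ≤ ‖a‖ ^ 2 + 4⁻¹ * ‖z - p z‖ ^ 2 := by
    nlinarith [real_inner_le_norm a (z - p z), two_mul_le_add_sq (2 * ‖a‖) ‖z - p z‖]
  have h₃ := norm_sub_sq_le_two_mul z aₛ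
  linarith [le_abs_self α, le_abs_self αₛ, abs_nonneg α, abs_nonneg αₛ, sq_nonneg ‖aₛ‖]

end ProxOfConjugate

section Integral

variable {Ω : Type*} [MeasurableSpace Ω] {μ : Measure Ω}
  {X : Type*} [NormedAddCommGroup X] [InnerProductSpace ℝ X] [CompleteSpace X]
  {H : Type*} [NormedAddCommGroup H] [InnerProductSpace ℝ H] [CompleteSpace H]
  {L : Ω → X →L[ℝ] H}

lemma inner_integral_adjoint {v : Ω → H} (hv : Integrable (fun ω => (L ω).adjoint (v ω)) μ)
    (w : X) : ⟪∫ ω, (L ω).adjoint (v ω) ∂μ, w⟫ = ∫ ω, ⟪v ω, L ω w⟫ ∂μ := by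
  rw [real_inner_comm, ← integral_inner hv]
  congr 1 with ω
  rw [real_inner_comm, ContinuousLinearMap.adjoint_inner_left]

lemma integrable_inner_apply {v : Ω → H} (hv : Integrable (fun ω => (L ω).adjoint (v ω)) μ)
    (w : X) : Integrable (fun ω => ⟪v ω, L ω w⟫) μ := by
  simpa only [ContinuousLinearMap.adjoint_inner_left] using hv.inner_const (𝕜 := ℝ) w

lemma isConvexSmooth_integral_comp {φ : Ω → H → ℝ} {G : Ω → H → H}
    (hφ : ∀ ω, IsConvexSmooth (φ ω) (G ω)) (hφi : ∀ η, Integrable (fun ω => φ ω (L ω η)) μ)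
    (hGi : ∀ ξ, Integrable (fun ω => (L ω).adjoint (G ω (L ω ξ))) μ)
    (hLint : Integrable (fun ω => ‖L ω‖ ^ 2) μ) (hL1 : ∫ ω, ‖L ω‖ ^ 2 ∂μ ≤ 1) :
    IsConvexSmooth (fun η => ∫ ω, φ ω (L ω η) ∂μ)
      (fun ξ => ∫ ω, (L ω).adjoint (G ω (L ω ξ)) ∂μ) where
  add_inner_le ξ η := by
    have hpt : ∀ ω, φ ω (L ω ξ) + ⟪G ω (L ω ξ), L ω (η - ξ)⟫ ≤ φ ω (L ω η) := fun ω => by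
      simpa only [map_sub] using (hφ ω).add_inner_le (L ω ξ) (L ω η)
    have hi := integrable_inner_apply (hGi ξ) (η - ξ)
    rw [inner_integral_adjoint (hGi ξ), ← integral_add (hφi ξ) hi]
    exact integral_mono ((hφi ξ).add hi) (hφi η) hpt
  le_add_inner_add ξ η := by
    have hpt : ∀ ω, φ ω (L ω η) ≤ φ ω (L ω ξ) + ⟪G ω (L ω ξ), L ω (η - ξ)⟫ +
        2⁻¹ * ‖η - ξ‖ ^ 2 * ‖L ω‖ ^ 2 := fun ω => by
      have h := (hφ ω).le_add_inner_add (L ω ξ) (L ω η)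
      have hL := (L ω).le_opNorm (η - ξ)
      rw [← map_sub] at h
      nlinarith [norm_nonneg (L ω (η - ξ)), norm_nonneg (L ω), norm_nonneg (η - ξ)]
    have hi := integrable_inner_apply (hGi ξ) (η - ξ)
    have hq := hLint.const_mul (2⁻¹ * ‖η - ξ‖ ^ 2)
    have hfi : Integrable (fun ω => φ ω (L ω ξ) + ⟪G ω (L ω ξ), L ω (η - ξ)⟫) μ :=
      (hφi ξ).add hi
    calc ∫ ω, φ ω (L ω η) ∂μ
        ≤ ∫ ω, (φ ω (L ω ξ) + ⟪G ω (L ω ξ), L ω (η - ξ)⟫ + 2⁻¹ * ‖η - ξ‖ ^ 2 * ‖L ω‖ ^ 2) ∂μ :=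
          integral_mono (hφi η) (hfi.add hq) hpt
      _ = ∫ ω, φ ω (L ω ξ) ∂μ + ⟪∫ ω, (L ω).adjoint (G ω (L ω ξ)) ∂μ, η - ξ⟫ +
            2⁻¹ * ‖η - ξ‖ ^ 2 * ∫ ω, ‖L ω‖ ^ 2 ∂μ := by
          rw [integral_add hfi hq, integral_add (hφi ξ) hi, integral_const_mul,
            inner_integral_adjoint (hGi ξ)]
      _ ≤ _ := add_le_add_right (mul_le_of_le_one_right (by positivity) hL1) _

end Integral

section Measurability

variable {Ω : Type*} [MeasurableSpace Ω] {μ : Measure Ω}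

lemma measurable_of_forall_inner {X : Type*} [NormedAddCommGroup X] [InnerProductSpace ℝ X]
    [CompleteSpace X] [SecondCountableTopology X] [MeasurableSpace X] [BorelSpace X]
    {F : Ω → X} (h : ∀ x, Measurable fun ω => ⟪F ω, x⟫) : Measurable F := by
  obtain ⟨d, hd⟩ := TopologicalSpace.exists_dense_seq X
  -- a continuous injection of a Polish space is a measurable embedding (Lusin–Souslin)
  have hemb : MeasurableEmbedding fun (y : X) (m : ℕ) => ⟪y, d m⟫ := by
    refine Continuous.measurableEmbedding (continuous_pi fun m => by fun_prop) fun y y' hyy' => ?_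
    have heq := hd.equalizer (g := fun v => ⟪y, v⟫) (h := fun v => ⟪y', v⟫)
      (by fun_prop) (by fun_prop) (funext fun m => congrFun hyy' m)
    exact ext_inner_right ℝ fun v => congrFun heq v
  exact hemb.measurable_comp_iff.mp (measurable_pi_iff.mpr fun m => h (d m))

variable {H : Type*} [NormedAddCommGroup H] [InnerProductSpace ℝ H]
  [SecondCountableTopology H] [MeasurableSpace H] [BorelSpace H]

lemma measurable_sub_apply_zero {φ : Ω → H → ℝ} {G : Ω → H → H}
    (hφ : ∀ ω, IsConvexSmooth (φ ω) (G ω))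
    (hG : ∀ x : Ω → H, Measurable x → Measurable fun ω => G ω (x ω))
    {x : Ω → H} (hx : Measurable x) : Measurable fun ω => φ ω (x ω) - φ ω 0 := by
  refine measurable_of_tendsto_metrizable
    (f := fun (n : ℕ) ω => ∑ k ∈ Finset.range n, ⟪G ω (((k : ℝ) / n) • x ω), x ω⟫ / n)
    (fun n => Finset.measurable_sum _ fun k _ => ?_)
    (tendsto_pi_nhds.mpr fun ω => (hφ ω).tendsto_riemannSum (x ω))
  exact ((hG _ (hx.const_smul _)).inner hx).div_const _

lemma aemeasurable_morEnv_fconj {f : Ω → H → EReal} {p : Ω → H → H}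
    (hp : ∀ ω, IsResolvent (fconj (f ω)) (p ω))
    (hpmeas : ∀ x : Ω → H, Measurable x → Measurable fun ω => p ω (x ω))
    {rs : Ω → H} {ψ : Ω → ℝ} (hrs : Measurable rs) (hψ : AEMeasurable ψ μ)
    (hfrs : ∀ ω, fconj (f ω) (rs ω) = ψ ω) {x : Ω → H} (hx : Measurable x) :
    AEMeasurable (fun ω => (morEnv (fconj (f ω)) (x ω)).toReal) μ := by
  set e : Ω → H → ℝ := fun ω z => (morEnv (fconj (f ω)) z).toReal
  have hdiff : ∀ x : Ω → H, Measurable x → Measurable fun ω => e ω (x ω) - e ω 0 :=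
    fun x hx => measurable_sub_apply_zero (fun ω => (hp ω).isConvexSmooth_morEnv)
      (fun y hy => hy.sub (hpmeas y hy)) hx
  obtain ⟨S, hSc, hSd⟩ := TopologicalSpace.exists_countable_dense H
  have : Countable S := hSc.to_subtype
  have : Nonempty S := hSd.nonempty.to_subtype
  -- `e ω 0` is recovered from the measurable increments `e ω s - e ω 0` by the sup formula
  have hzero : ∀ ω, e ω 0 = ψ ω - ⨆ s : S, (e ω s - e ω 0 - 2⁻¹ * ‖(s : H) - rs ω‖ ^ 2) := by
    intro ω
    have hlub := (((hp ω).isLUB_morEnv_sub_half_sq (hfrs ω)).range_restrict_dense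
      ((hp ω).isConvexSmooth_morEnv.continuous.sub (by fun_prop)) hSd).range_sub_const (e ω 0)
    rw [show (fun s : S => e ω s - e ω 0 - 2⁻¹ * ‖(s : H) - rs ω‖ ^ 2) =
        fun s : S => e ω s - 2⁻¹ * ‖(s : H) - rs ω‖ ^ 2 - e ω 0 from funext fun s => by ring,
      hlub.ciSup_eq]
    ring
  have he0 : AEMeasurable (fun ω => e ω 0) μ := by
    refine (hψ.sub (AEMeasurable.iSup fun s => ?_)).congr (ae_of_all _ fun ω => (hzero ω).symm)
    exact ((hdiff _ measurable_const).sub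
      ((measurable_const.sub hrs).norm.pow_const 2 |>.const_mul _)).aemeasurable
  exact ((hdiff x hx).aemeasurable.add he0).congr (ae_of_all _ fun ω => sub_add_cancel _ _)

end Measurability

lemma integrable_norm_sq_of_lintegral_lt_top {Ω E : Type*} [MeasurableSpace Ω] {μ : Measure Ω}
    [NormedAddCommGroup E] [MeasurableSpace E] [OpensMeasurableSpace E] {r : Ω → E}
    (hr : Measurable r) (h : ∫⁻ ω, (‖r ω‖₊ : ℝ≥0∞) ^ 2 ∂μ < ⊤) :
    Integrable (fun ω => ‖r ω‖ ^ 2) μ :=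
  ⟨(hr.norm.pow_const 2).aestronglyMeasurable,
    by simpa [HasFiniteIntegral, enorm_pow, enorm_eq_nnnorm] using h⟩

section Integrability

variable {Ω : Type*} [MeasurableSpace Ω] {μ : Measure Ω}
  {X : Type*} [NormedAddCommGroup X] [InnerProductSpace ℝ X]
  {H : Type*} [NormedAddCommGroup H] [InnerProductSpace ℝ H] [MeasurableSpace H] [BorelSpace H]
  {L : Ω → X →L[ℝ] H}

lemma integrable_norm_apply_sq (hLmeas : ∀ ξ, Measurable fun ω => L ω ξ)
    (hLint : Integrable (fun ω => ‖L ω‖ ^ 2) μ) (ξ : X) :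
    Integrable (fun ω => ‖L ω ξ‖ ^ 2) μ :=
  (hLint.mul_const (‖ξ‖ ^ 2)).mono' ((hLmeas ξ).norm.pow_const 2).aestronglyMeasurable
    (ae_of_all _ fun ω => by
      rw [Real.norm_of_nonneg (sq_nonneg _)]; exact norm_apply_sq_le_opNorm_sq (L ω) ξ)

lemma integrable_adjoint_apply [CompleteSpace X] [SecondCountableTopology X] [MeasurableSpace X]
    [BorelSpace X] [CompleteSpace H] [SecondCountableTopology H] {v : Ω → H} (hv : Measurable v)
    (hv2 : Integrable (fun ω => ‖v ω‖ ^ 2) μ) (hLmeas : ∀ ξ, Measurable fun ω => L ω ξ)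
    (hLint : Integrable (fun ω => ‖L ω‖ ^ 2) μ) :
    Integrable (fun ω => (L ω).adjoint (v ω)) μ := by
  have hmeas : Measurable fun ω => (L ω).adjoint (v ω) := measurable_of_forall_inner fun x => by
    simpa only [ContinuousLinearMap.adjoint_inner_left] using hv.inner (hLmeas x)
  refine ((hLint.add hv2).div_const 2).mono' hmeas.aestronglyMeasurable (ae_of_all _ fun ω => ?_)
  calc ‖(L ω).adjoint (v ω)‖ ≤ ‖L ω‖ * ‖v ω‖ := by
        simpa only [LinearIsometryEquiv.norm_map] using (L ω).adjoint.le_opNorm (v ω)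
    _ ≤ (‖L ω‖ ^ 2 + ‖v ω‖ ^ 2) / 2 := by linarith [two_mul_le_add_sq ‖L ω‖ ‖v ω‖]

lemma integrable_norm_sq_of_norm_sub_sq [SecondCountableTopology H] {u v : Ω → H}
    (hv : Measurable v) (hu : Integrable (fun ω => ‖u ω‖ ^ 2) μ)
    (huv : Integrable (fun ω => ‖u ω - v ω‖ ^ 2) μ) : Integrable (fun ω => ‖v ω‖ ^ 2) μ :=
  ((hu.add huv).const_mul 2).mono' (hv.norm.pow_const 2).aestronglyMeasurable
    (ae_of_all _ fun ω => by
      simpa only [Real.norm_of_nonneg (sq_nonneg _), sub_sub_cancel, Pi.add_apply, mul_add] using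
        norm_sub_sq_le_two_mul (u ω) (u ω - v ω))

variable [SecondCountableTopology H] {f : Ω → H → EReal} {p : Ω → H → H} {r rs : Ω → H}
  {φ ψ : Ω → ℝ}

lemma integrable_morEnv_fconj_apply (hp : ∀ ω, IsResolvent (fconj (f ω)) (p ω))
    (hpmeas : ∀ x : Ω → H, Measurable x → Measurable fun ω => p ω (x ω))
    (hfr : ∀ ω, f ω (r ω) = φ ω) (hfrs : ∀ ω, fconj (f ω) (rs ω) = ψ ω) (hrs : Measurable rs)
    (hφ : Integrable φ μ) (hψ : Integrable ψ μ) (hr2 : Integrable (fun ω => ‖r ω‖ ^ 2) μ)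
    (hrs2 : Integrable (fun ω => ‖rs ω‖ ^ 2) μ) (hLmeas : ∀ ξ, Measurable fun ω => L ω ξ)
    (hLint : Integrable (fun ω => ‖L ω‖ ^ 2) μ) (η : X) :
    Integrable (fun ω => (morEnv (fconj (f ω)) (L ω η)).toReal) μ := by
  refine ((((hφ.abs.add hψ.abs).add hr2).add hrs2).add (hLint.mul_const (‖η‖ ^ 2))).mono'
    (aemeasurable_morEnv_fconj hp hpmeas hrs hψ.aemeasurable hfrs
      (hLmeas η)).aestronglyMeasurable (ae_of_all _ fun ω => ?_)
  simp only [Pi.add_apply, Real.norm_eq_abs]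
  linarith [(hp ω).abs_morEnv_fconj_le (hfr ω) (hfrs ω) (L ω η),
    norm_apply_sq_le_opNorm_sq (L ω) η]

lemma integrable_norm_sub_prox_sq (hp : ∀ ω, IsResolvent (fconj (f ω)) (p ω))
    (hpmeas : ∀ x : Ω → H, Measurable x → Measurable fun ω => p ω (x ω))
    (hfr : ∀ ω, f ω (r ω) = φ ω) (hfrs : ∀ ω, fconj (f ω) (rs ω) = ψ ω)
    (hφ : Integrable φ μ) (hψ : Integrable ψ μ) (hr2 : Integrable (fun ω => ‖r ω‖ ^ 2) μ)
    (hrs2 : Integrable (fun ω => ‖rs ω‖ ^ 2) μ) (hLmeas : ∀ ξ, Measurable fun ω => L ω ξ)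
    (hLint : Integrable (fun ω => ‖L ω‖ ^ 2) μ) (ξ : X) :
    Integrable (fun ω => ‖L ω ξ - p ω (L ω ξ)‖ ^ 2) μ := by
  refine (((((hφ.abs.add hψ.abs).add hr2).add hrs2).add
    (hLint.mul_const (‖ξ‖ ^ 2))).const_mul 6).mono'
    (((hLmeas ξ).sub (hpmeas _ (hLmeas ξ))).norm.pow_const 2).aestronglyMeasurable
    (ae_of_all _ fun ω => ?_)
  simp only [Pi.add_apply, Real.norm_of_nonneg (sq_nonneg _)]
  linarith [(hp ω).norm_sub_sq_le (hfr ω) (hfrs ω) (L ω ξ), norm_apply_sq_le_opNorm_sq (L ω) ξ]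

end Integrability

section Mixture

variable {Ω : Type*} [MeasurableSpace Ω] {μ : Measure Ω}
  {X : Type*} [NormedAddCommGroup X] [InnerProductSpace ℝ X] [CompleteSpace X]
  {H : Type*} [NormedAddCommGroup H] [InnerProductSpace ℝ H] [CompleteSpace H]
  {L : Ω → X →L[ℝ] H} {f : Ω → H → EReal} {p : Ω → H → H}

theorem isProxOf_rmiFun (hp : ∀ ω, IsResolvent (fconj (f ω)) (p ω))
    (he : ∀ η, Integrable (fun ω => (morEnv (fconj (f ω)) (L ω η)).toReal) μ)
    (hG : ∀ ξ, Integrable (fun ω => (L ω).adjoint (L ω ξ - p ω (L ω ξ))) μ)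
    (hLint : Integrable (fun ω => ‖L ω‖ ^ 2) μ) (hL1 : ∫ ω, ‖L ω‖ ^ 2 ∂μ ≤ 1) :
    IsProxOf (rmiFun μ L f) (fun ξ => ∫ ω, (L ω).adjoint (L ω ξ - p ω (L ω ξ)) ∂μ) :=
  (isConvexSmooth_integral_comp (fun ω => (hp ω).isConvexSmooth_morEnv) he hG hLint
    hL1).isProxOf_fconjSubHalfSq.1

theorem isProxOf_rcmFun [MeasurableSpace H] [BorelSpace H]
    (hp : ∀ ω, IsResolvent (fconj (f ω)) (p ω))
    (he : ∀ η, Integrable (fun ω => (morEnv (fconj (f ω)) (L ω η)).toReal) μ)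
    (hG : ∀ ξ, Integrable (fun ω => (L ω).adjoint (p ω (L ω ξ))) μ)
    (hLmeas : ∀ ξ, Measurable fun ω => L ω ξ) (hLint : Integrable (fun ω => ‖L ω‖ ^ 2) μ)
    (hL1 : ∫ ω, ‖L ω‖ ^ 2 ∂μ ≤ 1) :
    IsProxOf (rcmFun μ L f) (fun ξ => ξ - ∫ ω, (L ω).adjoint (p ω (L ω ξ)) ∂μ) := by
  have he' : ∀ η, Integrable (fun ω => (morEnv (fconj (fconj (f ω))) (L ω η)).toReal) μ :=
    fun η => by
      simp only [(hp _).morEnv_fconj_toReal]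
      exact ((integrable_norm_apply_sq hLmeas hLint η).const_mul _).sub (he η)
  exact (isConvexSmooth_integral_comp (fun ω => (hp ω).isConvexSmooth_morEnv_fconj) he' hG hLint
    hL1).isProxOf_fconjSubHalfSq.2

end Mixture

theorem stmt_15_general
    {Ω : Type*} [MeasurableSpace Ω] {μ : Measure Ω}
    {X : Type*} [NormedAddCommGroup X] [InnerProductSpace ℝ X] [CompleteSpace X]
    [SecondCountableTopology X] [MeasurableSpace X] [BorelSpace X]
    {H : Type*} [NormedAddCommGroup H] [InnerProductSpace ℝ H] [CompleteSpace H]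
    [SecondCountableTopology H] [MeasurableSpace H] [BorelSpace H]
    -- the family of functions `f_ω : H → (−∞, +∞]`, each with a continuous affine minorant
    (f : Ω → H → EReal)
    -- the integrability assumptions on `ω ↦ f_ω(r(ω))` and `ω ↦ f_ω*(r*(ω))`
    (r rs : Ω → H) (hrmeas : Measurable r) (hrsmeas : Measurable rs)
    (hr2 : (∫⁻ ω, (‖r ω‖₊ : ℝ≥0∞) ^ 2 ∂μ) < ⊤) (hrs2 : (∫⁻ ω, (‖rs ω‖₊ : ℝ≥0∞) ^ 2 ∂μ) < ⊤)
    (hfr : ∃ φ : Ω → ℝ, Integrable φ μ ∧ ∀ ω, f ω (r ω) = (φ ω : EReal))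
    (hfsr : ∃ ψ : Ω → ℝ, Integrable ψ μ ∧ ∀ ω, fconj (f ω) (rs ω) = (ψ ω : EReal))
    -- the proximity operators of the conjugates, and their measurability
    (p : Ω → H → H) (hp : ∀ ω, IsProxOf (fconj (f ω)) (p ω))
    (hpmeas : ∀ xs : Ω → H, Measurable xs → Measurable fun ω => p ω (xs ω))
    -- the family of bounded linear operators
    (L : Ω → X →L[ℝ] H)
    (hLmeas : ∀ ξ : X, Measurable fun ω => L ω ξ)
    (hLint : Integrable (fun ω => ‖L ω‖ ^ 2) μ)
    (hL1 : (∫ ω, ‖L ω‖ ^ 2 ∂μ) ≤ 1)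
    -- the proximity operators of the biconjugates `f_ω** = (f_ω*)*`
    (q : Ω → H → H) (hq : ∀ ω, IsProxOf (fconj (fconj (f ω))) (q ω)) :
    IsProxOf (rmiFun μ L f) (fun ξ : X => ∫ ω, (L ω).adjoint (q ω (L ω ξ)) ∂μ) ∧
    IsProxOf (rcmFun μ L f) (fun ξ : X => ξ - ∫ ω, (L ω).adjoint (p ω (L ω ξ)) ∂μ) := by
  obtain ⟨φ, hφi, hφ⟩ := hfr
  obtain ⟨ψ, hψi, hψ⟩ := hfsr
  have hr2' := integrable_norm_sq_of_lintegral_lt_top hrmeas hr2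
  have hrs2' := integrable_norm_sq_of_lintegral_lt_top hrsmeas hrs2
  have hres : ∀ ω, IsResolvent (fconj (f ω)) (p ω) := fun ω =>
    (hp ω).isResolvent_fconj (hφ ω) (hψ ω)
  have he := integrable_morEnv_fconj_apply hres hpmeas hφ hψ hrsmeas hφi hψi hr2' hrs2' hLmeas hLint
  have hA := integrable_norm_sub_prox_sq hres hpmeas hφ hψ hφi hψi hr2' hrs2' hLmeas hLint
  have hpL : ∀ ξ, Measurable fun ω => p ω (L ω ξ) := fun ξ => hpmeas _ (hLmeas ξ)
  constructor
  · simp only [(hres _).eq_sub_of_isProxOf_fconj (hq _)]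
    exact isProxOf_rmiFun hres he
      (fun ξ => integrable_adjoint_apply ((hLmeas ξ).sub (hpL ξ)) (hA ξ) hLmeas hLint) hLint hL1
  · refine isProxOf_rcmFun hres he (fun ξ => integrable_adjoint_apply (hpL ξ) ?_ hLmeas hLint)
      hLmeas hLint hL1
    exact integrable_norm_sq_of_norm_sub_sq (hpL ξ) (integrable_norm_apply_sq hLmeas hLint ξ) (hA ξ)

/-- Theorem 4.3(ix)-(x): the proximity operators of the integral proximal
mixture and comixture are `prox_{rmi(L_ω,f_ω)} = ξ ↦ ∫ L_ω*(prox_{f_ω**}(L_ω ξ)) dμ` and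
`prox_{rcm(L_ω,f_ω)} = ξ ↦ ξ − ∫ L_ω*(prox_{f_ω*}(L_ω ξ)) dμ`. -/
theorem stmt_15
    {Ω : Type*} [MeasurableSpace Ω] {μ : Measure Ω} [SigmaFinite μ] [μ.IsComplete]
    {X : Type*} [NormedAddCommGroup X] [InnerProductSpace ℝ X] [CompleteSpace X]
    [SecondCountableTopology X] [MeasurableSpace X] [BorelSpace X]
    {H : Type*} [NormedAddCommGroup H] [InnerProductSpace ℝ H] [CompleteSpace H]
    [SecondCountableTopology H] [MeasurableSpace H] [BorelSpace H]
    -- the family of functions `f_ω : H → (−∞, +∞]`, each with a continuous affine minorant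
    (f : Ω → H → EReal)
    (hmin : ∀ ω, ∃ (u : H) (c : ℝ), ∀ x : H, ((inner ℝ x u + c : ℝ) : EReal) ≤ f ω x)
    -- the integrability assumptions on `ω ↦ f_ω(r(ω))` and `ω ↦ f_ω*(r*(ω))`
    (r rs : Ω → H) (hrmeas : Measurable r) (hrsmeas : Measurable rs)
    (hr2 : (∫⁻ ω, (‖r ω‖₊ : ℝ≥0∞) ^ 2 ∂μ) < ⊤) (hrs2 : (∫⁻ ω, (‖rs ω‖₊ : ℝ≥0∞) ^ 2 ∂μ) < ⊤)
    (hfr : ∃ φ : Ω → ℝ, Integrable φ μ ∧ ∀ ω, f ω (r ω) = (φ ω : EReal))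
    (hfsr : ∃ ψ : Ω → ℝ, Integrable ψ μ ∧ ∀ ω, fconj (f ω) (rs ω) = (ψ ω : EReal))
    -- the proximity operators of the conjugates, and their measurability
    (p : Ω → H → H) (hp : ∀ ω, IsProxOf (fconj (f ω)) (p ω))
    (hpmeas : ∀ xs : Ω → H, Measurable xs → Measurable fun ω => p ω (xs ω))
    -- the family of bounded linear operators
    (L : Ω → X →L[ℝ] H)
    (hLmeas : ∀ ξ : X, Measurable fun ω => L ω ξ)
    (hLint : Integrable (fun ω => ‖L ω‖ ^ 2) μ)
    (hL0 : 0 < ∫ ω, ‖L ω‖ ^ 2 ∂μ) (hL1 : (∫ ω, ‖L ω‖ ^ 2 ∂μ) ≤ 1)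
    -- the proximity operators of the biconjugates `f_ω** = (f_ω*)*`
    (q : Ω → H → H) (hq : ∀ ω, IsProxOf (fconj (fconj (f ω))) (q ω)) :
    IsProxOf (rmiFun μ L f) (fun ξ : X => ∫ ω, (L ω).adjoint (q ω (L ω ξ)) ∂μ) ∧
    IsProxOf (rcmFun μ L f) (fun ξ : X => ξ - ∫ ω, (L ω).adjoint (p ω (L ω ξ)) ∂μ) :=
  stmt_15_general f r rs hrmeas hrsmeas hr2 hrs2 hfr hfsr p hp hpmeas L hLmeas hLint hL1 q hq
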